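/- arXiv:2506.24080 — 3 statements merged into one kernel-verified Lean document; each statement's English description precedes it below -/
import Mathlib

section
/- The wheel graphs satisfy η(W_3) = 3, η(W_6) = 5, and η(W_8) = 5. -/
open SimpleGraph

variable {V : Type*}

/-- Two vertices have isomorphic labeled links: an equivalence of neighborhoods preserving
adjacency and edge labels. -/
def LabeledLinkIso (G : SimpleGraph V) (ℓ : Sym2 V → ℕ+) (u v : V) : Prop :=
  ∃ e : (G.neighborSet u) ≃ (G.neighborSet v),
    (∀ a b : G.neighborSet u, G.Adj a.1 b.1 ↔ G.Adj (e a).1 (e b).1) ∧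
    (∀ a b : G.neighborSet u, G.Adj a.1 b.1 → ℓ s(a.1, b.1) = ℓ s((e a).1, (e b).1))

/-- An edge labeling is link-irregular if distinct vertices have non-isomorphic labeled links. -/
def IsLinkIrregular (G : SimpleGraph V) (ℓ : Sym2 V → ℕ+) : Prop :=
  ∀ u v : V, u ≠ v → ¬ LabeledLinkIso G ℓ u v

/-- A graph admits a link-irregular labeling. -/
def HasLinkIrregularLabeling (G : SimpleGraph V) : Prop :=
  ∃ ℓ : Sym2 V → ℕ+, IsLinkIrregular G ℓ

/-- The link-irregular labeling number η(G): the minimum number of distinct labels used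
on the edges of G over all link-irregular labelings, or ∞ if none exists. -/
noncomputable def linkIrregularNumber (G : SimpleGraph V) : ℕ∞ :=
  sInf {c : ℕ∞ | ∃ ℓ : Sym2 V → ℕ+, IsLinkIrregular G ℓ ∧ c = ((ℓ '' G.edgeSet).ncard : ℕ∞)}

/-- The edge set of the link of x, viewed as a set of edges of G. -/
def linkEdgeSet (G : SimpleGraph V) (x : V) : Set (Sym2 V) :=
  {e | e ∈ G.edgeSet ∧ ∀ v ∈ e, v ∈ G.neighborSet x}

/-- Active neighborhood. -/
def activeNeighborSet (G : SimpleGraph V) (x : V) : Set V :=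
  {u ∈ G.neighborSet x | ∃ w ∈ G.neighborSet x, G.Adj u w}

/-- A graph is cut-irregular if distinct vertex-deleted subgraphs are non-isomorphic. -/
def CutIrregular (H : SimpleGraph V) : Prop :=
  ∀ u v : V, u ≠ v → ¬ Nonempty ((H.induce ({u} : Set V)ᶜ) ≃g (H.induce ({v} : Set V)ᶜ))

/-- The wheel graph W_n: a cycle C_n together with a universal vertex. -/
def wheelGraph (n : ℕ) : SimpleGraph (Option (Fin n)) where
  Adj x y :=
    match x, y with
    | none, none => False
    | none, some _ => True
    | some _, none => True
    | some i, some j => (cycleGraph n).Adj i j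
  symm := by
    constructor
    rintro (_|i) (_|j) h
    · exact h
    · trivial
    · trivial
    · exact (cycleGraph n).adj_symm h
  loopless := by
    constructor
    rintro (_|i) h
    · exact h
    · exact (cycleGraph n).irrefl h

/-- The join of two graphs. -/
def graphJoin {W : Type*} (G : SimpleGraph V) (H : SimpleGraph W) : SimpleGraph (V ⊕ W) where
  Adj x y :=
    match x, y with
    | Sum.inl a, Sum.inl b => G.Adj a b
    | Sum.inr a, Sum.inr b => H.Adj a b
    | _, _ => True
  symm := by
    constructor
    rintro (a|a) (b|b) h
    · exact G.adj_symm h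
    · trivial
    · trivial
    · exact H.adj_symm h
  loopless := by
    constructor
    rintro (a|a) h
    · exact G.irrefl h
    · exact H.irrefl h

/-- The hypercube graph Q_n. -/
def hypercubeGraph (n : ℕ) : SimpleGraph (Fin n → Bool) where
  Adj x y := (Finset.univ.filter fun i => x i ≠ y i).card = 1
  symm := by
    constructor
    intro x y h
    have : (Finset.univ.filter fun i => y i ≠ x i) = (Finset.univ.filter fun i => x i ≠ y i) := by
      apply Finset.filter_congr
      intro i _
      simp [ne_comm]
    rw [this]
    exact h
  loopless := by
    constructor
    intro x h
    simp at h

/-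
The link of a rim vertex `i` of `W_n`, `n ≥ 4`, is the path `(i - 1) – hub – (i + 1)`, labeled
only by the two spokes at `i ± 1`. A rotation or a reflection of the rim carries it onto the link
of `j` as soon as the unordered pairs of spoke labels at `i ± 1` and `j ± 1` agree, so in a
link-irregular labeling with spoke labels `t` the map `i ↦ {t (i - 1), t (i + 1)}` is injective.
For `n = 6, 8` the pairs at odd and at even `i` are the edges of two closed walks of length `n / 2`
in the complete graph with loops on the labels, and an exhaustive check shows that with four labels
two such walks, each with distinct edges, always share an edge; hence `η ≥ 5`. For `W_3 = K_4` the
labelings with two labels are checked directly. Labeling the spokes suitably and every rim edge `1`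
attains the bounds.
-/

open Function

section Labeling

variable {G : SimpleGraph V}

instance [Fintype V] [DecidableEq V] [DecidableRel G.Adj] (ℓ : Sym2 V → ℕ+) (u v : V) :
    Decidable (LabeledLinkIso G ℓ u v) := by
  unfold LabeledLinkIso; infer_instance

instance [Fintype V] [DecidableEq V] [DecidableRel G.Adj] (ℓ : Sym2 V → ℕ+) :
    Decidable (IsLinkIrregular G ℓ) := by
  unfold IsLinkIrregular; infer_instance

theorem labeledLinkIso_of_iso {ℓ : Sym2 V → ℕ+} (φ : G ≃g G) (u : V)
    (h : ∀ e ∈ linkEdgeSet G u, ℓ (e.map φ) = ℓ e) : LabeledLinkIso G ℓ u (φ u) := by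
  refine ⟨φ.toEquiv.subtypeEquiv fun a => φ.map_adj_iff.symm, fun a b => φ.map_adj_iff.symm,
    fun a b hab => (h s(a.1, b.1) ⟨hab, ?_⟩).symm⟩
  intro v hv
  rcases Sym2.mem_iff.1 hv with rfl | rfl
  exacts [a.2, b.2]

theorem IsLinkIrregular.of_labels_eq_imp {ℓ ℓ' : Sym2 V → ℕ+} (hℓ : IsLinkIrregular G ℓ)
    (h : ∀ e ∈ G.edgeSet, ∀ e' ∈ G.edgeSet, ℓ' e = ℓ' e' → ℓ e = ℓ e') :
    IsLinkIrregular G ℓ' := by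
  rintro u v huv ⟨e, hadj, hlab⟩
  exact hℓ u v huv ⟨e, hadj, fun a b hab => h _ hab _ ((hadj a b).1 hab) (hlab a b hab)⟩

theorem IsLinkIrregular.exists_labels_mem [Finite V] {ℓ : Sym2 V → ℕ+}
    (hℓ : IsLinkIrregular G ℓ) {T : Finset ℕ+} (hT : (ℓ '' G.edgeSet).ncard ≤ T.card) :
    ∃ ℓ' : Sym2 V → ℕ+, IsLinkIrregular G ℓ' ∧ ∀ e ∈ G.edgeSet, ℓ' e ∈ T := by
  have hfin : (ℓ '' G.edgeSet).Finite := Set.toFinite _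
  obtain ⟨f, hfT, hf⟩ := hfin.exists_injOn_of_encard_le (t := (T : Set ℕ+))
    (by rw [← hfin.cast_ncard_eq, Set.encard_coe_eq_coe_finsetCard]; exact_mod_cast hT)
  exact ⟨f ∘ ℓ, hℓ.of_labels_eq_imp fun e he e' he' h => hf ⟨e, he, rfl⟩ ⟨e', he', rfl⟩ h,
    fun e he => hfT ⟨e, he, rfl⟩⟩

theorem linkIrregularNumber_eq [DecidableEq V] [Fintype G.edgeSet] {k : ℕ} (ℓ : Sym2 V → ℕ+)
    (hℓ : IsLinkIrregular G ℓ) (hk : (G.edgeFinset.image ℓ).card = k)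
    (hmin : ∀ ℓ', IsLinkIrregular G ℓ' → k ≤ (ℓ' '' G.edgeSet).ncard) :
    linkIrregularNumber G = k := by
  refine le_antisymm (sInf_le ⟨ℓ, hℓ, ?_⟩) (le_sInf ?_)
  · rw [← coe_edgeFinset, ← Finset.coe_image, Set.ncard_coe_finset, hk]
  · rintro c ⟨ℓ', hℓ', rfl⟩
    exact_mod_cast hmin ℓ' hℓ'

end Labeling

section Wheel

open Fin.CommRing

variable {m : ℕ}

def cycleGraphAddRight (c : Fin (m + 2)) : cycleGraph (m + 2) ≃g cycleGraph (m + 2) where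
  toEquiv := Equiv.addRight c
  map_rel_iff' := by simp [cycleGraph_adj]

def cycleGraphSubLeft (c : Fin (m + 2)) : cycleGraph (m + 2) ≃g cycleGraph (m + 2) where
  toEquiv := Equiv.subLeft c
  map_rel_iff' := by simp [cycleGraph_adj, or_comm]

theorem cycleGraph_not_adj_sub_one_add_one (i : Fin (m + 4)) :
    ¬ (cycleGraph (m + 4)).Adj (i - 1) (i + 1) := by
  rw [cycleGraph_adj, show i - 1 - (i + 1) = -2 by ring, show i + 1 - (i - 1) = 2 by ring,
    neg_eq_iff_eq_neg]
  simp [Fin.ext_iff, Fin.val_neg, Nat.mod_eq_of_lt]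

instance (n : ℕ) : DecidableRel (wheelGraph n).Adj
  | none, none => isFalse id
  | none, some _ => isTrue trivial
  | some _, none => isTrue trivial
  | some i, some j => inferInstanceAs (Decidable ((cycleGraph n).Adj i j))

@[simp] theorem wheelGraph_adj_none_some {n : ℕ} (i : Fin n) :
    (wheelGraph n).Adj none (some i) :=
  trivial

@[simp] theorem wheelGraph_adj_some_none {n : ℕ} (i : Fin n) :
    (wheelGraph n).Adj (some i) none :=
  trivial

@[simp] theorem wheelGraph_adj_some_some {n : ℕ} {i j : Fin n} :
    (wheelGraph n).Adj (some i) (some j) ↔ (cycleGraph n).Adj i j :=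
  Iff.rfl

def wheelGraphIsoOfCycle {n : ℕ} (ψ : cycleGraph n ≃g cycleGraph n) :
    wheelGraph n ≃g wheelGraph n where
  toEquiv := Equiv.optionCongr ψ.toEquiv
  map_rel_iff' := by
    rintro (_ | a) (_ | b) <;> simp [ψ.map_adj_iff]

theorem mem_neighborSet_wheelGraph_some {i : Fin (m + 2)} {x : Option (Fin (m + 2))} :
    x ∈ (wheelGraph (m + 2)).neighborSet (some i) ↔
      x = none ∨ x = some (i - 1) ∨ x = some (i + 1) := by
  cases x with
  | none => simp
  | some k =>
    rw [mem_neighborSet, wheelGraph_adj_some_some, ← mem_neighborSet, cycleGraph_neighborSet]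
    simp

theorem eq_spoke_of_mem_linkEdgeSet_wheelGraph_some {i : Fin (m + 4)}
    {e : Sym2 (Option (Fin (m + 4)))} (he : e ∈ linkEdgeSet (wheelGraph (m + 4)) (some i)) :
    e = s(none, some (i - 1)) ∨ e = s(none, some (i + 1)) := by
  induction e using Sym2.ind with | h a b => ?_
  obtain ⟨hab, hmem⟩ := he
  rw [mem_edgeSet] at hab
  have ha := mem_neighborSet_wheelGraph_some.1 (hmem a (Sym2.mem_mk_left a b))
  have hb := mem_neighborSet_wheelGraph_some.1 (hmem b (Sym2.mem_mk_right a b))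
  have hnadj := cycleGraph_not_adj_sub_one_add_one i
  rcases ha with rfl | rfl | rfl <;> rcases hb with rfl | rfl | rfl <;>
    simp_all [Sym2.eq_swap]
  exact hnadj hab.symm

def spokePairs {n : ℕ} [NeZero n] {α : Type*} (t : Fin n → α) (i : Fin n) : Sym2 α :=
  s(t (i - 1), t (i + 1))

theorem wheelGraph_labeledLinkIso_some {ℓ : Sym2 (Option (Fin (m + 4))) → ℕ+}
    {i j : Fin (m + 4)}
    (h : spokePairs (fun k => ℓ s(none, some k)) i = spokePairs (fun k => ℓ s(none, some k)) j) :
    LabeledLinkIso (wheelGraph (m + 4)) ℓ (some i) (some j) := by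
  rcases Sym2.eq_iff.1 h with ⟨h₁, h₂⟩ | ⟨h₁, h₂⟩
  · have := labeledLinkIso_of_iso (ℓ := ℓ) (wheelGraphIsoOfCycle (cycleGraphAddRight (j - i)))
      (some i) fun e he => ?_
    · simpa [wheelGraphIsoOfCycle, cycleGraphAddRight] using this
    rcases eq_spoke_of_mem_linkEdgeSet_wheelGraph_some he with rfl | rfl
    · simpa [wheelGraphIsoOfCycle, cycleGraphAddRight, show i - 1 + (j - i) = j - 1 by ring]
        using h₁.symm
    · simpa [wheelGraphIsoOfCycle, cycleGraphAddRight, show i + 1 + (j - i) = j + 1 by ring]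
        using h₂.symm
  · have := labeledLinkIso_of_iso (ℓ := ℓ) (wheelGraphIsoOfCycle (cycleGraphSubLeft (i + j)))
      (some i) fun e he => ?_
    · simpa [wheelGraphIsoOfCycle, cycleGraphSubLeft] using this
    rcases eq_spoke_of_mem_linkEdgeSet_wheelGraph_some he with rfl | rfl
    · simpa [wheelGraphIsoOfCycle, cycleGraphSubLeft, show i + j - (i - 1) = j + 1 by ring]
        using h₁.symm
    · simpa [wheelGraphIsoOfCycle, cycleGraphSubLeft, show i + j - (i + 1) = j - 1 by ring]
        using h₂.symm

theorem IsLinkIrregular.injective_spokePairs {ℓ : Sym2 (Option (Fin (m + 4))) → ℕ+}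
    (hℓ : IsLinkIrregular (wheelGraph (m + 4)) ℓ) :
    Injective (spokePairs fun k => ℓ s(none, some k)) := fun i j h => by
  by_contra hij
  exact hℓ _ _ (Option.some_injective _ |>.ne hij) (wheelGraph_labeledLinkIso_some h)

theorem IsLinkIrregular.four_lt_ncard_wheelGraph {ℓ : Sym2 (Option (Fin (m + 4))) → ℕ+}
    (hℓ : IsLinkIrregular (wheelGraph (m + 4)) ℓ)
    (hpairs : ∀ t : Fin (m + 4) → ℕ+, (∀ i, t i ∈ ({1, 2, 3, 4} : Finset ℕ+)) →
      ¬ Injective (spokePairs t)) :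
    4 < (ℓ '' (wheelGraph (m + 4)).edgeSet).ncard := by
  by_contra! h
  obtain ⟨ℓ', hℓ', hT⟩ := hℓ.exists_labels_mem (T := {1, 2, 3, 4}) h
  exact hpairs _ (fun i => hT _ (wheelGraph_adj_none_some i)) hℓ'.injective_spokePairs

end Wheel

theorem not_injective_spokePairs_six (t : Fin 6 → ℕ+)
    (ht : ∀ i, t i ∈ ({1, 2, 3, 4} : Finset ℕ+)) : ¬ Injective (spokePairs t) := by
  intro hinj
  have h := List.nodup_ofFn.2 (hinj.comp (show Injective ![1, 3, 5, 2, 4, 0] by decide))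
  change ([s(t 0, t 2), s(t 2, t 4), s(t 4, t 0)] ++ [s(t 1, t 3), s(t 3, t 5), s(t 5, t 1)]).Nodup
    at h
  obtain ⟨hE, hO, hdisj⟩ := List.nodup_append.1 h
  -- The `Nodup` hypotheses only prune the exhaustive search.
  have key : ∀ a ∈ ({1, 2, 3, 4} : Finset ℕ+), ∀ b ∈ ({1, 2, 3, 4} : Finset ℕ+),
      ∀ c ∈ ({1, 2, 3, 4} : Finset ℕ+), [s(a, b), s(b, c), s(c, a)].Nodup →
      ∀ x ∈ ({1, 2, 3, 4} : Finset ℕ+), ∀ y ∈ ({1, 2, 3, 4} : Finset ℕ+),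
      ∀ z ∈ ({1, 2, 3, 4} : Finset ℕ+), [s(x, y), s(y, z), s(z, x)].Nodup →
      ∃ p ∈ [s(a, b), s(b, c), s(c, a)], p ∈ [s(x, y), s(y, z), s(z, x)] := by
    decide +kernel
  obtain ⟨p, hpE, hpO⟩ := key _ (ht 0) _ (ht 2) _ (ht 4) hE _ (ht 1) _ (ht 3) _ (ht 5) hO
  exact hdisj p hpE p hpO rfl

theorem not_injective_spokePairs_eight (t : Fin 8 → ℕ+)
    (ht : ∀ i, t i ∈ ({1, 2, 3, 4} : Finset ℕ+)) : ¬ Injective (spokePairs t) := by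
  intro hinj
  have h := List.nodup_ofFn.2 (hinj.comp (show Injective ![1, 3, 5, 7, 2, 4, 6, 0] by decide))
  change ([s(t 0, t 2), s(t 2, t 4), s(t 4, t 6), s(t 6, t 0)] ++
    [s(t 1, t 3), s(t 3, t 5), s(t 5, t 7), s(t 7, t 1)]).Nodup at h
  obtain ⟨hE, hO, hdisj⟩ := List.nodup_append.1 h
  have key : ∀ a ∈ ({1, 2, 3, 4} : Finset ℕ+), ∀ b ∈ ({1, 2, 3, 4} : Finset ℕ+),
      ∀ c ∈ ({1, 2, 3, 4} : Finset ℕ+), ∀ d ∈ ({1, 2, 3, 4} : Finset ℕ+),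
      [s(a, b), s(b, c), s(c, d), s(d, a)].Nodup →
      ∀ w ∈ ({1, 2, 3, 4} : Finset ℕ+), ∀ x ∈ ({1, 2, 3, 4} : Finset ℕ+),
      ∀ y ∈ ({1, 2, 3, 4} : Finset ℕ+), ∀ z ∈ ({1, 2, 3, 4} : Finset ℕ+),
      [s(w, x), s(x, y), s(y, z), s(z, w)].Nodup →
      ∃ p ∈ [s(a, b), s(b, c), s(c, d), s(d, a)], p ∈ [s(w, x), s(x, y), s(y, z), s(z, w)] := by
    decide +kernel
  obtain ⟨p, hpE, hpO⟩ :=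
    key _ (ht 0) _ (ht 2) _ (ht 4) _ (ht 6) hE _ (ht 1) _ (ht 3) _ (ht 5) _ (ht 7) hO
  exact hdisj p hpE p hpO rfl

def wheelThreeLabeling (a b c x y z : ℕ+) : Sym2 (Option (Fin 3)) → ℕ+ := fun e =>
  if e = s(none, some 0) then a else if e = s(none, some 1) then b else
  if e = s(none, some 2) then c else if e = s(some 1, some 2) then x else
  if e = s(some 0, some 2) then y else z

theorem wheelThreeLabeling_eq (ℓ : Sym2 (Option (Fin 3)) → ℕ+) {e : Sym2 (Option (Fin 3))}
    (he : e ∈ (wheelGraph 3).edgeSet) :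
    wheelThreeLabeling (ℓ s(none, some 0)) (ℓ s(none, some 1)) (ℓ s(none, some 2))
      (ℓ s(some 1, some 2)) (ℓ s(some 0, some 2)) (ℓ s(some 0, some 1)) e = ℓ e := by
  have hE : (wheelGraph 3).edgeFinset = {s(none, some 0), s(none, some 1), s(none, some 2),
      s(some 1, some 2), s(some 0, some 2), s(some 0, some 1)} := by
    decide +kernel
  have he' := mem_edgeFinset.2 he
  rw [hE] at he'
  simp only [Finset.mem_insert, Finset.mem_singleton] at he'
  rcases he' with rfl | rfl | rfl | rfl | rfl | rfl <;> rfl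

theorem IsLinkIrregular.two_lt_ncard_wheelGraph_three {ℓ : Sym2 (Option (Fin 3)) → ℕ+}
    (hℓ : IsLinkIrregular (wheelGraph 3) ℓ) : 2 < (ℓ '' (wheelGraph 3).edgeSet).ncard := by
  by_contra! h
  obtain ⟨ℓ', hℓ', hT⟩ := hℓ.exists_labels_mem (T := {1, 2}) h
  have key : ∀ a ∈ ({1, 2} : Finset ℕ+), ∀ b ∈ ({1, 2} : Finset ℕ+), ∀ c ∈ ({1, 2} : Finset ℕ+),
      ∀ x ∈ ({1, 2} : Finset ℕ+), ∀ y ∈ ({1, 2} : Finset ℕ+), ∀ z ∈ ({1, 2} : Finset ℕ+),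
      ¬ IsLinkIrregular (wheelGraph 3) (wheelThreeLabeling a b c x y z) := by
    decide +kernel
  refine key _ (hT s(none, some 0) trivial) _ (hT s(none, some 1) trivial)
    _ (hT s(none, some 2) trivial) _ (hT s(some 1, some 2) (by decide))
    _ (hT s(some 0, some 2) (by decide)) _ (hT s(some 0, some 1) (by decide))
    (hℓ'.of_labels_eq_imp fun e he e' he' h => ?_)
  rwa [wheelThreeLabeling_eq ℓ' he, wheelThreeLabeling_eq ℓ' he'] at h

def spokeLabeling {n : ℕ} (t : Fin n → ℕ+) : Sym2 (Option (Fin n)) → ℕ+ :=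
  Sym2.lift ⟨fun a b => match a, b with
    | none, some i => t i
    | some i, none => t i
    | _, _ => 1, by rintro (_ | a) (_ | b) <;> rfl⟩

/-- η(W_3) = 3, η(W_6) = 5, η(W_8) = 5. -/
theorem stmt_9 :
    linkIrregularNumber (wheelGraph 3) = 3 ∧
    linkIrregularNumber (wheelGraph 6) = 5 ∧
    linkIrregularNumber (wheelGraph 8) = 5 :=
  ⟨linkIrregularNumber_eq (spokeLabeling ![1, 2, 3]) (by decide +kernel) (by decide +kernel)
      fun _ hℓ => hℓ.two_lt_ncard_wheelGraph_three,
    linkIrregularNumber_eq (spokeLabeling ![1, 1, 2, 4, 3, 5]) (by decide +kernel)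
      (by decide +kernel) fun _ hℓ => hℓ.four_lt_ncard_wheelGraph not_injective_spokePairs_six,
    linkIrregularNumber_eq (spokeLabeling ![1, 1, 2, 1, 3, 3, 4, 5]) (by decide +kernel)
      (by decide +kernel) fun _ hℓ => hℓ.four_lt_ncard_wheelGraph not_injective_spokePairs_eight⟩
end

section
/- Let ℓ be a link-irregular labeling of the complete graph K_n using exactly the two labels "red" and "blue". Then the spanning subgraph G_red of K_n, on the same n vertices and consisting of exactly the red-labeled edges, is a cut-irregular graph on n vertices. -/
open SimpleGraph

variable {V : Type*}

/-- The spanning subgraph of K_n consisting of the edges labeled `red`. -/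
def redSubgraph (n : ℕ) (ℓ : Sym2 (Fin n) → ℕ+) (red : ℕ+) : SimpleGraph (Fin n) where
  Adj u v := u ≠ v ∧ ℓ s(u, v) = red
  symm := by
    constructor
    rintro u v ⟨h1, h2⟩
    exact ⟨h1.symm, by rwa [Sym2.eq_swap]⟩
  loopless := by
    constructor
    rintro u ⟨h1, _⟩
    exact h1 rfl

def SimpleGraph.neighborSetTopEquiv (u : V) :
    (⊤ : SimpleGraph V).neighborSet u ≃ (({u} : Set V)ᶜ : Set V) :=
  Equiv.subtypeEquivRight fun _ => by simp [ne_comm]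

theorem labeledLinkIso_top_of_equiv {ℓ : Sym2 V → ℕ+} {u v : V}
    (e : (({u} : Set V)ᶜ : Set V) ≃ (({v} : Set V)ᶜ : Set V))
    (he : ∀ a b : (({u} : Set V)ᶜ : Set V), a.1 ≠ b.1 →
      ℓ s(a.1, b.1) = ℓ s((e a).1, (e b).1)) :
    LabeledLinkIso ⊤ ℓ u v := by
  set f := (neighborSetTopEquiv u).trans (e.trans (neighborSetTopEquiv v).symm)
  have hf : ∀ a b, (f a).1 = (f b).1 ↔ a.1 = b.1 := fun a b => by
    rw [← Subtype.ext_iff, ← Subtype.ext_iff, f.apply_eq_iff_eq]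
  refine ⟨f, fun a b => by simp only [top_adj, ne_eq, hf], fun a b hab => ?_⟩
  exact he (neighborSetTopEquiv u a) (neighborSetTopEquiv u b) hab

theorem redSubgraph_adj {n : ℕ} {ℓ : Sym2 (Fin n) → ℕ+} {red : ℕ+} {u v : Fin n} :
    (redSubgraph n ℓ red).Adj u v ↔ u ≠ v ∧ ℓ s(u, v) = red :=
  Iff.rfl

theorem eq_of_eq_or_eq_of_iff {α : Type*} {a c r b : α} (ha : a = r ∨ a = b)
    (hc : c = r ∨ c = b) (h : a = r ↔ c = r) : a = c := by
  grind

/-- When all edges are labeled `red` or `blue`, an isomorphism `H - u ≃ H - v` of the red graph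
is at the same time an isomorphism of the labeled links of `u` and `v` in `K_n`. -/
theorem stmt_11_general (n : ℕ) (red blue : ℕ+)
    (ℓ : Sym2 (Fin n) → ℕ+)
    (hlab : ∀ e ∈ (⊤ : SimpleGraph (Fin n)).edgeSet, ℓ e = red ∨ ℓ e = blue)
    (hirr : IsLinkIrregular (⊤ : SimpleGraph (Fin n)) ℓ) :
    CutIrregular (redSubgraph n ℓ red) := by
  rintro u v huv ⟨φ⟩
  refine hirr u v huv (labeledLinkIso_top_of_equiv φ.toEquiv fun a b hab => ?_)
  have hab' : (φ a).1 ≠ (φ b).1 := fun h =>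
    hab (congrArg Subtype.val (φ.injective (Subtype.ext h)))
  refine eq_of_eq_or_eq_of_iff (hlab _ hab) (hlab _ hab') ?_
  have hred : (redSubgraph n ℓ red).Adj (φ a) (φ b) ↔ (redSubgraph n ℓ red).Adj a b :=
    φ.map_adj_iff
  rw [redSubgraph_adj, redSubgraph_adj, and_iff_right hab, and_iff_right hab'] at hred
  exact hred.symm

/-- if ℓ is a link-irregular labeling of K_n using the two labels red and blue,
then the graph of red edges is cut-irregular. -/
theorem stmt_11 (n : ℕ) (red blue : ℕ+) (hrb : red ≠ blue)
    (ℓ : Sym2 (Fin n) → ℕ+)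
    (hlab : ∀ e ∈ (⊤ : SimpleGraph (Fin n)).edgeSet, ℓ e = red ∨ ℓ e = blue)
    (hirr : IsLinkIrregular (⊤ : SimpleGraph (Fin n)) ℓ) :
    CutIrregular (redSubgraph n ℓ red) :=
  stmt_11_general n red blue ℓ hlab hirr
end

section
/- If G is a cut-irregular graph on n vertices, then the 2-labeling of the complete graph K_n on the vertex set of G that assigns the label "red" to every edge of G and the label "blue" to every remaining edge of K_n is a link-irregular labeling of K_n. -/
open SimpleGraph

variable {V : Type*}

/-
In `K_n` every vertex `u` is adjacent to all others, so its link is the complete graph on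
`V ∖ {u}`, and the red edges of that link are exactly the edges of `G - u`. An isomorphism of
labeled links of `u` and `v` preserves colours, hence is an isomorphism `G - u ≃ G - v`, which
cut-irregularity forbids.
-/

namespace SimpleGraph

theorem adj_iff_label_eq_of_two_coloring {G : SimpleGraph V} {ℓ : Sym2 V → ℕ+} {red blue : ℕ+}
    (hrb : red ≠ blue)
    (hℓ : ∀ u v : V, u ≠ v → ((G.Adj u v → ℓ s(u, v) = red) ∧ (¬ G.Adj u v → ℓ s(u, v) = blue)))
    {x y : V} (hxy : x ≠ y) : G.Adj x y ↔ ℓ s(x, y) = red := by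
  refine ⟨(hℓ x y hxy).1, fun hred => ?_⟩
  by_contra hnadj
  exact hrb (hred.symm.trans ((hℓ x y hxy).2 hnadj))

theorem LabeledLinkIso.nonempty_induce_iso {G H : SimpleGraph V} (hGH : G ≤ H)
    {ℓ : Sym2 V → ℕ+} {c : ℕ+}
    (hℓ : ∀ x y, H.Adj x y → (G.Adj x y ↔ ℓ s(x, y) = c)) {u v : V}
    (h : LabeledLinkIso H ℓ u v) :
    Nonempty (G.induce (H.neighborSet u) ≃g G.induce (H.neighborSet v)) := by
  obtain ⟨e, hadj, hlab⟩ := h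
  refine ⟨{ toEquiv := e, map_rel_iff' := fun {a b} => ?_ }⟩
  change G.Adj (e a).1 (e b).1 ↔ G.Adj a.1 b.1
  by_cases hab : H.Adj a.1 b.1
  · rw [hℓ _ _ hab, hℓ _ _ ((hadj a b).1 hab), hlab a b hab]
  · have hab' : ¬ H.Adj (e a).1 (e b).1 := mt (hadj a b).2 hab
    exact iff_of_false (fun h => hab' (hGH h)) (fun h => hab (hGH h))

end SimpleGraph

theorem stmt_12_general {V : Type*} (G : SimpleGraph V)
    (hG : CutIrregular G) (red blue : ℕ+) (hrb : red ≠ blue)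
    (ℓ : Sym2 V → ℕ+)
    (hℓ : ∀ u v : V, u ≠ v → ((G.Adj u v → ℓ s(u, v) = red) ∧ (¬ G.Adj u v → ℓ s(u, v) = blue))) :
    IsLinkIrregular (⊤ : SimpleGraph V) ℓ := by
  intro u v huv hiso
  have hcut := hiso.nonempty_induce_iso le_top
    fun _ _ hxy => adj_iff_label_eq_of_two_coloring hrb hℓ hxy
  rw [neighborSet_top, neighborSet_top] at hcut
  exact hG u v huv hcut

/-- if G is cut-irregular, then labeling the edges of G red and the remaining
edges of the complete graph blue gives a link-irregular labeling of the complete graph. -/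
theorem stmt_12 {V : Type*} [Fintype V] (G : SimpleGraph V) [DecidableRel G.Adj]
    (hG : CutIrregular G) (red blue : ℕ+) (hrb : red ≠ blue)
    (ℓ : Sym2 V → ℕ+)
    (hℓ : ∀ u v : V, u ≠ v → ((G.Adj u v → ℓ s(u, v) = red) ∧ (¬ G.Adj u v → ℓ s(u, v) = blue))) :
    IsLinkIrregular (⊤ : SimpleGraph V) ℓ :=
  stmt_12_general G hG red blue hrb ℓ hℓ
end
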